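/- arXiv:1401.4574 — 7 statements merged into one kernel-verified Lean document; each statement's English description precedes it below -/
import Mathlib

section
/- Let X be a finite quandle such that Inn(X) acts primitively on X. Then X is a simple quandle: every surjective quandle homomorphism from X to a quandle Q with more than one element is injective. -/
/-!
A quandle homomorphism `p` intertwines each generator `φ x` of `Inn X` with `φ (p x)`, so every
inner automorphism of `X` permutes the fibres of `p`. Hence each fibre is a block of the `Inn X`
action, and primitivity forces it to be a singleton (so `p` is injective) or all of `X` (so `p` is
constant, impossible for a surjection onto a nontrivial `Q`).
-/

/-- The inner automorphism group of a quandle: the subgroup of permutations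
generated by the maps `φ x : y ↦ x ◃ y`. -/
def Inn (X : Type*) [Quandle X] : Subgroup (Equiv.Perm X) :=
  Subgroup.closure (Set.range (fun x : X => Rack.act' x))

open Quandles

theorem Inn.exists_semiconj {X Q : Type*} [Quandle X] [Rack Q] {p : X → Q}
    (hp : ∀ a b : X, p (a ◃ b) = p a ◃ p b) {g : Equiv.Perm X} (hg : g ∈ Inn X) :
    ∃ σ : Equiv.Perm Q, Function.Semiconj p g σ := by
  induction hg using Subgroup.closure_induction with
  | mem _ hx =>
    obtain ⟨x, rfl⟩ := hx
    exact ⟨Rack.act' (p x), fun y => by simp only [Rack.act'_apply, hp]⟩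
  | one => exact ⟨1, fun _ => rfl⟩
  | mul _ _ _ _ hg₁ hg₂ =>
    obtain ⟨σ, hσ⟩ := hg₁
    obtain ⟨τ, hτ⟩ := hg₂
    exact ⟨σ * τ, hσ.comp_right hτ⟩
  | inv h _ hh =>
    obtain ⟨σ, hσ⟩ := hh
    exact ⟨σ⁻¹, hσ.inverses_right h.right_inv σ.left_inv⟩

theorem Function.Semiconj.image_preimage {α β : Type*} {p : α → β} {g : Equiv.Perm α}
    {σ : Equiv.Perm β} (h : Function.Semiconj p g σ) (s : Set β) :
    g '' (p ⁻¹' s) = p ⁻¹' (σ '' s) := by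
  have h_symm : Function.Semiconj p g.symm σ.symm := h.inverses_right g.right_inv σ.left_inv
  rw [Equiv.image_eq_preimage_symm, Equiv.image_eq_preimage_symm, ← Set.preimage_comp,
    ← Set.preimage_comp, h_symm.comp_eq]

theorem Inn.image_fiber_eq_or_disjoint {X Q : Type*} [Quandle X] [Rack Q] {p : X → Q}
    (hp : ∀ a b : X, p (a ◃ b) = p a ◃ p b) (q : Q) {g : Equiv.Perm X} (hg : g ∈ Inn X) :
    g '' (p ⁻¹' {q}) = p ⁻¹' {q} ∨ Disjoint (g '' (p ⁻¹' {q})) (p ⁻¹' {q}) := by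
  obtain ⟨σ, hσ⟩ := Inn.exists_semiconj hp hg
  rw [hσ.image_preimage, Set.image_singleton]
  by_cases hq : σ q = q
  · exact Or.inl (by rw [hq])
  · exact Or.inr ((Set.disjoint_singleton.mpr hq).preimage p)

theorem stmt3_general {X : Type*} [Quandle X]
    (hblocks : ∀ B : Set X,
      (∀ g ∈ Inn X, (g : Equiv.Perm X) '' B = B ∨ Disjoint ((g : Equiv.Perm X) '' B) B) →
      B.Subsingleton ∨ B = Set.univ) :
    ∀ (Q : Type*) (_ : Quandle Q) (p : X → Q), Function.Surjective p →
      (∀ a b : X, p (Shelf.act a b) = Shelf.act (p a) (p b)) → Nontrivial Q →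
      Function.Injective p := by
  intro Q _ p hsurj hp _ a b hab
  rcases hblocks (p ⁻¹' {p a}) (fun g hg => Inn.image_fiber_eq_or_disjoint hp (p a) hg) with
    hsub | huniv
  · exact hsub rfl hab.symm
  · have hconst : ∀ x, p x = p a := fun x => (huniv ▸ Set.mem_univ x : x ∈ p ⁻¹' {p a})
    obtain ⟨q₁, q₂, hq⟩ := exists_pair_ne Q
    obtain ⟨x₁, rfl⟩ := hsurj q₁
    obtain ⟨x₂, rfl⟩ := hsurj q₂
    exact (hq (by rw [hconst x₁, hconst x₂])).elim

theorem stmt3 {X : Type*} [Quandle X] [Fintype X]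
    (htrans : ∀ x y : X, ∃ g ∈ Inn X, g x = y)
    (hblocks : ∀ B : Set X,
      (∀ g ∈ Inn X, (g : Equiv.Perm X) '' B = B ∨ Disjoint ((g : Equiv.Perm X) '' B) B) →
      B.Subsingleton ∨ B = Set.univ) :
    ∀ (Q : Type*) (_ : Quandle Q) (p : X → Q), Function.Surjective p →
      (∀ a b : X, p (Shelf.act a b) = Shelf.act (p a) (p b)) → Nontrivial Q →
      Function.Injective p :=
  stmt3_general hblocks
end

section
/- Let X be a quandle of cyclic type (i.e., for each x ∈ X the permutation φ_x acts on X \ {x} as a single cycle of length |X| − 1) with |X| = n ≥ 3, and let x ∈ X. Then the stabilizer of x in G = Inn(X) is the cyclic group generated by φ_x. -/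
/-- A finite quandle is of cyclic type if each `φ x` is a cycle whose unique
fixed point is `x` (i.e. it acts as an `(n-1)`-cycle on `X \ {x}`). -/
def IsCyclicType (X : Type*) [Quandle X] : Prop :=
  ∀ x : X, Equiv.Perm.IsCycle (Rack.act' x) ∧ ∀ y : X, Rack.act' x y = y ↔ y = x

/-! The stabilizer of `x` in `Inn X` centralizes `φ x`, because inner automorphisms conjugate
`φ y` to `φ (f y)`. A permutation commuting with a cycle acts on its support as a power of the
cycle; since the support of `φ x` is everything but `x`, a permutation fixing `x` and commuting
with `φ x` is a power of `φ x`. -/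

namespace Equiv.Perm

theorem IsCycle.mem_zpowers_of_commute {α : Type*} [DecidableEq α] [Fintype α]
    {f c : Perm α} (hc : c.IsCycle) (hfc : Commute f c) (hf : ∀ y ∉ c.support, f y = y) :
    f ∈ Subgroup.zpowers c := by
  obtain ⟨hsupp, hpow⟩ := hc.commute_iff.mp hfc
  rwa [ofSubtype_subtypePerm hsupp fun y hy => by_contra fun h => hy (hf y h)] at hpow

end Equiv.Perm

open Equiv Rack

theorem conj_act'_of_mem_Inn {X : Type*} [Quandle X] {f : Perm X} (hf : f ∈ Inn X) (y : X) :
    f * act' y * f⁻¹ = act' (f y) := by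
  induction hf using Subgroup.closure_induction generalizing y with
  | mem g hg =>
    obtain ⟨z, rfl⟩ := hg
    exact (ad_conj z y).symm
  | one => simp
  | mul g h _ _ ihg ihh =>
    rw [Perm.mul_apply, ← ihg, ← ihh]
    group
  | inv g _ ihg =>
    calc g⁻¹ * act' y * g⁻¹⁻¹ = g⁻¹ * (g * act' (g⁻¹ y) * g⁻¹) * g := by simp [ihg]
      _ = act' (g⁻¹ y) := by group

theorem commute_act'_of_mem_Inn {X : Type*} [Quandle X] {f : Perm X} (hf : f ∈ Inn X)
    {x : X} (hfx : f x = x) : Commute f (act' x) :=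
  mul_inv_eq_iff_eq_mul.mp <| by rw [conj_act'_of_mem_Inn hf, hfx]

theorem stmt4_general {X : Type*} [Quandle X] [Fintype X]
    (hc : IsCyclicType X) (x : X) (f : Equiv.Perm X) :
    (f ∈ Inn X ∧ f x = x) ↔ f ∈ Subgroup.zpowers (Rack.act' x) := by
  classical
  constructor
  · rintro ⟨hf, hfx⟩
    refine (hc x).1.mem_zpowers_of_commute (commute_act'_of_mem_Inn hf hfx) fun y hy => ?_
    rw [Perm.notMem_support, (hc x).2] at hy
    rwa [hy]
  · rintro ⟨k, rfl⟩
    exact ⟨zpow_mem (Subgroup.subset_closure (Set.mem_range_self x)) k,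
      Perm.zpow_apply_eq_self_of_apply_eq_self Quandle.fix k⟩

theorem stmt4 {X : Type*} [Quandle X] [Fintype X] (h3 : 3 ≤ Fintype.card X)
    (hc : IsCyclicType X) (x : X) (f : Equiv.Perm X) :
    (f ∈ Inn X ∧ f x = x) ↔ f ∈ Subgroup.zpowers (Rack.act' x) :=
  stmt4_general hc x f
end

section
/- Let n ≥ 3 and let X be a quandle of cyclic type with n elements. Then Inn(X) acting on X is a Frobenius permutation group: the stabilizers of any two distinct points intersect trivially. -/
/-
Let `f ∈ Inn X` fix two distinct points `x` and `y`. Inner automorphisms satisfy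
`f ∘ φ_z ∘ f⁻¹ = φ_{f z}`, so `f` commutes with `φ_x`, hence with all its powers.
Since `φ_x` is a single cycle through every point other than `x`, each such point is
`φ_x ^ i y` for some `i`, and is therefore fixed by `f` as `y` is.
-/

theorem Equiv.Perm.apply_eq_self_of_commute_of_sameCycle {α : Type*} {f σ : Equiv.Perm α}
    (hcomm : Commute f σ) {y z : α} (hy : f y = y) (hyz : σ.SameCycle y z) : f z = z := by
  obtain ⟨i, rfl⟩ := hyz
  rw [← Equiv.Perm.mul_apply, (hcomm.zpow_right i).eq, Equiv.Perm.mul_apply, hy]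

theorem Inn.mul_act'_mul_inv {X : Type*} [Quandle X] {f : Equiv.Perm X} (hf : f ∈ Inn X)
    (z : X) : f * Rack.act' z * f⁻¹ = Rack.act' (f z) := by
  induction hf using Subgroup.closure_induction generalizing z with
  | mem g hg =>
    obtain ⟨x, rfl⟩ := hg
    exact (Rack.ad_conj x z).symm
  | one => simp
  | mul g h _ _ hg hh =>
    calc g * h * Rack.act' z * (g * h)⁻¹ = g * (h * Rack.act' z * h⁻¹) * g⁻¹ := by group
      _ = Rack.act' (g (h z)) := by rw [hh, hg]
  | inv g _ hg =>
    calc g⁻¹ * Rack.act' z * g⁻¹⁻¹ = g⁻¹ * (g * Rack.act' (g⁻¹ z) * g⁻¹) * g := by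
          rw [hg, ← Equiv.Perm.mul_apply, mul_inv_cancel, Equiv.Perm.one_apply, inv_inv]
      _ = Rack.act' (g⁻¹ z) := by group

theorem Inn.commute_act'_of_apply_eq_self {X : Type*} [Quandle X] {f : Equiv.Perm X}
    (hf : f ∈ Inn X) {x : X} (hfx : f x = x) : Commute f (Rack.act' x) := by
  have hconj := Inn.mul_act'_mul_inv hf x
  rw [hfx, mul_inv_eq_iff_eq_mul] at hconj
  exact hconj

theorem stmt6_general {X : Type*} [Quandle X]
    (hc : IsCyclicType X) :
    ∀ x y : X, x ≠ y → ∀ f ∈ Inn X, f x = x → f y = y → f = 1 := by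
  intro x y hxy f hf hfx hfy
  obtain ⟨hcycle, hfixed⟩ := hc x
  have hcomm := Inn.commute_act'_of_apply_eq_self hf hfx
  ext z
  rw [Equiv.Perm.one_apply]
  by_cases hzx : z = x
  · rw [hzx, hfx]
  · have hy : Rack.act' x y ≠ y := fun h => hxy ((hfixed y).mp h).symm
    have hz : Rack.act' x z ≠ z := fun h => hzx ((hfixed z).mp h)
    exact Equiv.Perm.apply_eq_self_of_commute_of_sameCycle hcomm hfy (hcycle.sameCycle hy hz)

theorem stmt6 {X : Type*} [Quandle X] [Fintype X] (h3 : 3 ≤ Fintype.card X)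
    (hc : IsCyclicType X) :
    ∀ x y : X, x ≠ y → ∀ f ∈ Inn X, f x = x → f y = y → f = 1 :=
  stmt6_general hc
end

section
/- Let q be a power of a prime, and let α ∈ 𝔽_q define the Alexander quandle on 𝔽_q by x ▷ y = (1 − α)x + α y. This quandle is of cyclic type if and only if α generates the multiplicative group 𝔽_q^×, i.e., α has multiplicative order q − 1. -/
private lemma iter_formula {F : Type*} [Field F] (α x y : F) (k : ℕ) :
    (fun y : F => (1 - α) * x + α * y)^[k] y = x + α ^ k * (y - x) := by
  induction k with
  | zero => simp
  | succ n ih => rw [Function.iterate_succ_apply', ih]; ring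

theorem stmt7 {F : Type*} [Field F] [Fintype F] (α : F) :
    (∀ x : F, Function.Bijective (fun y : F => (1 - α) * x + α * y) ∧
      ∀ y : F, y ≠ x → ∀ z : F, z ≠ x →
        ∃ k : ℕ, (fun y : F => (1 - α) * x + α * y)^[k] y = z) ↔
      orderOf α = Fintype.card F - 1 := by
  have hcard : 1 < Fintype.card F := Fintype.one_lt_card
  haveI : Fintype Fˣ := Fintype.ofFinite Fˣ
  constructor
  · intro h
    obtain ⟨hbij, htrans⟩ := h 0
    have hα : α ≠ 0 := by
      rintro rfl
      have := hbij.1 (a₁ := 0) (a₂ := 1) (by simp)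
      exact one_ne_zero this.symm
    set u : Fˣ := Units.mk0 α hα with hu
    have hall : ∀ v : Fˣ, v ∈ Subgroup.zpowers u := by
      intro v
      obtain ⟨k, hk⟩ := htrans 1 one_ne_zero (v : F) v.ne_zero
      rw [iter_formula] at hk
      refine ⟨(k : ℤ), ?_⟩
      show u ^ (k : ℤ) = v
      rw [zpow_natCast]
      ext
      push_cast [hu]
      simpa using hk
    have horder : orderOf u = Nat.card Fˣ :=
      orderOf_eq_card_of_forall_mem_zpowers hall
    have : orderOf α = orderOf u := by
      rw [← orderOf_units, hu, Units.val_mk0]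
    rw [this, horder, Nat.card_units, Nat.card_eq_fintype_card]
  · intro h
    have hα : α ≠ 0 := by
      rintro rfl
      have h1 : (0 : F) ^ orderOf (0 : F) = 1 := pow_orderOf_eq_one 0
      rw [h, zero_pow (by omega)] at h1
      exact zero_ne_one h1
    set u : Fˣ := Units.mk0 α hα with hu
    have horder : orderOf u = Nat.card Fˣ := by
      rw [← orderOf_units, Units.val_mk0, h, Nat.card_units, Nat.card_eq_fintype_card]
    have hall : ∀ v : Fˣ, v ∈ Subgroup.zpowers u := by
      intro v
      have : Subgroup.zpowers u = ⊤ := by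
        apply Subgroup.eq_top_of_card_eq
        rw [Nat.card_zpowers, horder, Nat.card_eq_fintype_card]
      rw [this]; trivial
    intro x
    constructor
    · rw [Fintype.bijective_iff_injective_and_card]
      refine ⟨fun a b hab => ?_, rfl⟩
      simp only at hab
      exact mul_left_cancel₀ hα (add_left_cancel hab)
    · intro y hy z hz
      have hw : (z - x) / (y - x) ≠ 0 :=
        div_ne_zero (sub_ne_zero.mpr hz) (sub_ne_zero.mpr hy)
      obtain ⟨n, hn⟩ := mem_powers_iff_mem_zpowers.mpr (hall (Units.mk0 _ hw))
      have hαn : α ^ n = (z - x) / (y - x) := by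
        have := congrArg (Units.val) hn
        push_cast [hu] at this
        simpa using this
      refine ⟨n, ?_⟩
      rw [iter_formula, hαn, div_mul_cancel₀ _ (sub_ne_zero.mpr hy)]
      ring
end

section
/- Let n ≥ 3. If there exists a quandle of cyclic type with n elements, then n is a power of a prime number. -/
/-!
`Inn X` acts sharply 2-transitively on `X`: the powers of `φ x` move any point of `X \ {x}` to
any other, and an inner automorphism fixing `x` commutes with `φ x`, so if it also fixes some
`y ≠ x` it fixes the whole `φ x`-orbit `X \ {x}`.

For a finite group `G` acting 2-transitively on `X`, `|X| = n`, with only `1` fixing two points,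
Burnside's lemma shows that exactly `n - 1` elements of `G` are fixed-point-free. Conjugating one
of them by the stabiliser of a point `x` already yields fixed-point-free elements sending `x` to
every `y ≠ x`, so a fixed-point-free element is determined by its value at `x` and any two are
conjugate. If `p ∣ n` is prime, Cauchy's theorem gives `g` of order `p`, and `g` has no fixed
point since the number of its fixed points is `≡ n ≡ 0 [MOD p]` and at most one. Hence any two
primes dividing `n` are orders of conjugate elements, so they coincide.
-/

theorem IsConj.orderOf_eq {G : Type*} [Group G] {a b : G} (h : IsConj a b) :
    orderOf a = orderOf b := by
  obtain ⟨c, hc⟩ := h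
  exact hc.orderOf_eq

namespace MulAction

variable {G X : Type*} [Group G] [MulAction G X]

theorem card_fixedPointFree [Fintype G] [Fintype X] [DecidableEq X] [IsPretransitive G X]
    [Nonempty X] (hfree : ∀ g : G, g ≠ 1 → (fixedBy X g).Subsingleton) :
    Fintype.card {g : G // ∀ x : X, g • x ≠ x} = Fintype.card X - 1 := by
  classical
  have burnside : ∑ g : G, Fintype.card (fixedBy X g) = Fintype.card G := by
    have : Subsingleton (orbitRel.Quotient G X) :=
      (pretransitive_iff_subsingleton_quotient G X).mp inferInstance
    have : Inhabited (orbitRel.Quotient G X) := ⟨Quotient.mk _ (Classical.arbitrary X)⟩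
    have : Unique (orbitRel.Quotient G X) := Unique.mk' _
    rw [sum_card_fixedBy_eq_card_orbits_mul_card_group, Fintype.card_unique, one_mul]
  have pointwise (g : G) : Fintype.card (fixedBy X g) + (if ∀ x : X, g • x ≠ x then 1 else 0) =
      1 + (if g = 1 then Fintype.card X - 1 else 0) := by
    rcases eq_or_ne g 1 with rfl | hg
    · simp [Nat.add_sub_cancel' Fintype.card_pos]
    by_cases hfpf : ∀ x : X, g • x ≠ x
    · simp [hg, hfpf]
    · obtain ⟨x, hx⟩ := not_forall_not.mp hfpf
      have hone : Fintype.card (fixedBy X g) = 1 :=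
        Fintype.card_eq_one_iff.mpr ⟨⟨x, hx⟩, fun y => Subtype.ext (hfree g hg y.2 hx)⟩
      simp [hg, hfpf, hone]
  have total := Finset.sum_congr rfl fun g (_ : g ∈ Finset.univ) => pointwise g
  rw [Finset.sum_add_distrib, Finset.sum_add_distrib, burnside, ← Finset.card_filter,
    Finset.sum_ite_eq', if_pos (Finset.mem_univ _), Finset.sum_const, Finset.card_univ,
    smul_eq_mul, mul_one] at total
  rw [Fintype.card_subtype]
  omega

theorem conj_smul_ne {g : G} (hg : ∀ x : X, g • x ≠ x) (a : G) :
    ∀ x : X, (a * g * a⁻¹) • x ≠ x := by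
  intro x hx
  rw [mul_smul, mul_smul] at hx
  exact hg _ (eq_inv_smul_iff.mpr hx)

theorem exists_conj_smul_eq [IsMultiplyPretransitive G X 2] {g : G} (hg : ∀ x : X, g • x ≠ x)
    {x y : X} (hy : y ≠ x) : ∃ a : G, (a * g * a⁻¹) • x = y := by
  obtain ⟨a, hax, hay⟩ := is_two_pretransitive_iff.mp ‹_› (hg x).symm hy.symm
  refine ⟨a, ?_⟩
  rw [mul_smul, mul_smul, inv_smul_eq_iff.mpr hax.symm, hay]

variable [Finite G] [Finite X] (hfree : ∀ g : G, g ≠ 1 → (fixedBy X g).Subsingleton)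
include hfree

theorem eq_of_smul_eq_of_fixedPointFree [IsMultiplyPretransitive G X 2] {g h : G}
    (hg : ∀ x : X, g • x ≠ x) (hh : ∀ x : X, h • x ≠ x) {x : X} (hx : g • x = h • x) :
    g = h := by
  classical
  have := Fintype.ofFinite G
  have := Fintype.ofFinite X
  have : IsPretransitive G X := isPretransitive_of_is_two_pretransitive
  have : Nonempty X := ⟨x⟩
  let eval : {k : G // ∀ y : X, k • y ≠ y} → {y : X // y ≠ x} := fun k => ⟨k.1 • x, k.2 x⟩
  have eval_surjective : Function.Surjective eval := fun ⟨y, hy⟩ =>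
    let ⟨a, ha⟩ := exists_conj_smul_eq hg hy
    ⟨⟨_, conj_smul_ne hg a⟩, Subtype.ext ha⟩
  have eval_bijective : Function.Bijective eval :=
    (Fintype.bijective_iff_surjective_and_card eval).mpr
      ⟨eval_surjective, by simp [card_fixedPointFree hfree]⟩
  exact congrArg Subtype.val (eval_bijective.1 (a₁ := ⟨g, hg⟩) (a₂ := ⟨h, hh⟩) (Subtype.ext hx))

theorem isConj_of_fixedPointFree [IsMultiplyPretransitive G X 2] [Nonempty X] {g h : G}
    (hg : ∀ x : X, g • x ≠ x) (hh : ∀ x : X, h • x ≠ x) : IsConj g h := by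
  obtain ⟨x⟩ := ‹Nonempty X›
  obtain ⟨a, ha⟩ := exists_conj_smul_eq hg (hh x)
  exact isConj_iff.mpr ⟨a, eq_of_smul_eq_of_fixedPointFree hfree (conj_smul_ne hg a) hh ha⟩

theorem exists_fixedPointFree_orderOf_eq_prime [IsPretransitive G X] [Nonempty X] {p : ℕ}
    (hp : p.Prime) (hpX : p ∣ Nat.card X) : ∃ g : G, orderOf g = p ∧ ∀ x : X, g • x ≠ x := by
  have := Fact.mk hp
  have := Fintype.ofFinite X
  obtain ⟨x⟩ := ‹Nonempty X›
  have hpG : p ∣ Nat.card G :=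
    hpX.trans (index_stabilizer_of_transitive G x ▸ (stabilizer G x).index_dvd_card)
  obtain ⟨g, hg⟩ := exists_prime_orderOf_dvd_card' p hpG
  have hg1 : g ≠ 1 := by
    rintro rfl
    exact hp.one_lt.ne (orderOf_one.symm.trans hg)
  have hperm : toPermHom G X g ^ p ^ 1 = 1 := by
    rw [pow_one, ← map_pow, ← hg, pow_orderOf_eq_one, map_one]
  refine ⟨g, hg, fun y hy => ?_⟩
  obtain ⟨z, hz, hzy⟩ := Equiv.Perm.exists_fixed_point_of_prime'
    (by rwa [Nat.card_eq_fintype_card] at hpX) hperm hy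
  exact hzy (hfree g hg1 hz hy)

theorem isPrimePow_card_of_isMultiplyPretransitive [IsMultiplyPretransitive G X 2]
    (hX : 2 ≤ Nat.card X) : IsPrimePow (Nat.card X) := by
  have : IsPretransitive G X := isPretransitive_of_is_two_pretransitive
  have : Nonempty X := (Nat.card_pos_iff.mp (by omega)).1
  obtain ⟨p, hp, hpX⟩ := Nat.exists_prime_and_dvd (show Nat.card X ≠ 1 by omega)
  refine isPrimePow_iff_unique_prime_dvd.mpr ⟨p, ⟨hp, hpX⟩, fun q ⟨hq, hqX⟩ => ?_⟩
  obtain ⟨g, hgp, hg⟩ := exists_fixedPointFree_orderOf_eq_prime hfree hp hpX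
  obtain ⟨h, hhq, hh⟩ := exists_fixedPointFree_orderOf_eq_prime hfree hq hqX
  rw [← hgp, ← hhq]
  exact (isConj_of_fixedPointFree hfree hh hg).orderOf_eq

end MulAction

open MulAction

namespace Quandle

variable {X : Type*} [Quandle X]

theorem act'_mem_inn (x : X) : Rack.act' x ∈ Inn X :=
  Subgroup.subset_closure ⟨x, rfl⟩

theorem act'_apply_of_mem_inn {g : Equiv.Perm X} (hg : g ∈ Inn X) (x : X) :
    Rack.act' (g x) = g * Rack.act' x * g⁻¹ := by
  induction hg using Subgroup.closure_induction generalizing x with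
  | mem a ha =>
    obtain ⟨y, rfl⟩ := ha
    exact Rack.ad_conj y x
  | one => simp
  | mul a b _ _ iha ihb =>
    rw [Equiv.Perm.mul_apply, iha, ihb]
    group
  | inv a _ iha =>
    have h := iha (a⁻¹ x)
    rw [← Equiv.Perm.mul_apply, mul_inv_cancel, Equiv.Perm.one_apply] at h
    rw [h]
    group

end Quandle

namespace IsCyclicType

open Quandle

variable {X : Type*} [Quandle X] (hc : IsCyclicType X)
include hc

theorem exists_zpow_act'_apply_eq {x y z : X} (hy : y ≠ x) (hz : z ≠ x) :
    ∃ k : ℤ, (Rack.act' x ^ k) y = z :=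
  (hc x).1.exists_zpow_eq (mt ((hc x).2 y).mp hy) (mt ((hc x).2 z).mp hz)

theorem zpow_act'_apply_self (x : X) (k : ℤ) : (Rack.act' x ^ k) x = x :=
  Equiv.Perm.zpow_apply_eq_self_of_apply_eq_self (((hc x).2 x).mpr rfl) k

theorem isPretransitive_inn [Fintype X] (h3 : 3 ≤ Fintype.card X) :
    IsPretransitive (Inn X) X := by
  classical
  refine ⟨fun y z => ?_⟩
  rcases eq_or_ne y z with rfl | hyz
  · exact ⟨1, one_smul _ _⟩
  obtain ⟨x, -, hx⟩ := Finset.exists_mem_notMem_of_card_lt_card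
    (s := {y, z}) (t := Finset.univ) (by grw [Finset.card_le_two]; simpa)
  simp only [Finset.mem_insert, Finset.mem_singleton, not_or] at hx
  obtain ⟨k, hk⟩ := hc.exists_zpow_act'_apply_eq (Ne.symm hx.1) (Ne.symm hx.2)
  exact ⟨⟨_, zpow_mem (act'_mem_inn x) k⟩, hk⟩

theorem isMultiplyPretransitive_inn [Fintype X] (h3 : 3 ≤ Fintype.card X) :
    IsMultiplyPretransitive (Inn X) X 2 := by
  have := hc.isPretransitive_inn h3
  refine is_two_pretransitive_iff.mpr fun {a b c d} hab hcd => ?_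
  obtain ⟨g, rfl⟩ := exists_smul_eq (Inn X) a c
  obtain ⟨k, hk⟩ := hc.exists_zpow_act'_apply_eq
    ((smul_left_cancel_iff g).not.mpr hab.symm) hcd.symm
  refine ⟨⟨_, zpow_mem (act'_mem_inn (g • a)) k⟩ * g, ?_, ?_⟩
  · rw [mul_smul]
    exact hc.zpow_act'_apply_self _ k
  · rw [mul_smul]
    exact hk

theorem eq_one_of_mem_inn {g : Equiv.Perm X} (hg : g ∈ Inn X) {x y : X} (hxy : y ≠ x)
    (hx : g x = x) (hy : g y = y) : g = 1 := by
  have hcomm : Commute g (Rack.act' x) := by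
    have h := act'_apply_of_mem_inn hg x
    rw [hx] at h
    exact mul_inv_eq_iff_eq_mul.mp h.symm
  ext z
  rcases eq_or_ne z x with rfl | hz
  · exact hx
  obtain ⟨k, rfl⟩ := hc.exists_zpow_act'_apply_eq hxy hz
  rw [← Equiv.Perm.mul_apply, (hcomm.zpow_right k).eq, Equiv.Perm.mul_apply, hy]
  rfl

theorem fixedBy_inn_subsingleton (g : Inn X) (hg : g ≠ 1) : (fixedBy X g).Subsingleton := by
  intro x hx y hy
  by_contra hxy
  exact hg (Subtype.ext (hc.eq_one_of_mem_inn g.2 (Ne.symm hxy) hx hy))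

end IsCyclicType

theorem stmt11 (n : ℕ) (h3 : 3 ≤ n)
    (h : ∃ (X : Type) (_ : Fintype X) (_ : Quandle X),
      Fintype.card X = n ∧ IsCyclicType X) :
    IsPrimePow n := by
  obtain ⟨X, _, _, rfl, hc⟩ := h
  have := hc.isMultiplyPretransitive_inn h3
  rw [← Nat.card_eq_fintype_card]
  exact isPrimePow_card_of_isMultiplyPretransitive hc.fixedBy_inn_subsingleton
    (by rw [Nat.card_eq_fintype_card]; omega)
end

section
/- For every prime p and natural number m ≥ 1 with p^m ≥ 3, there exists a quandle of cyclic type with exactly p^m elements. -/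
/-!
In the Alexander quandle `x ◃ y = u (y - x) + x` on a field `F`, the powers of `φ_x` are the
maps `y ↦ uᵏ (y - x) + x`. When `u` generates `Fˣ`, the values `uᵏ` run through all of `Fˣ`,
so `φ_x` moves `x + 1` to every `y ≠ x`; and `u ≠ 1` makes `x` the only fixed point.
The field `𝔽_{p^m}` has a cyclic unit group, which is nontrivial as soon as `p^m ≥ 3`.
-/

section Alexander

variable {R : Type*} [CommRing R]

@[reducible]
def alexanderQuandle (u : Rˣ) : Quandle R where
  act x y := u * (y - x) + x
  self_distrib := by intros; ring
  invAct x y := ↑u⁻¹ * (y - x) + x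
  left_inv x y := by simp [← mul_assoc]
  right_inv x y := by simp [← mul_assoc]
  fix := by intro x; simp

theorem alexanderQuandle_act'_zpow (u : Rˣ) (x y : R) (k : ℤ) :
    letI := alexanderQuandle u
    (Rack.act' x ^ k) y = ↑(u ^ k) * (y - x) + x := by
  let := alexanderQuandle u
  induction k using Int.induction_on generalizing y with
  | zero => simp
  | succ k ih =>
    rw [zpow_add_one, Equiv.Perm.mul_apply, ih, zpow_add_one, Units.val_mul]
    change _ * (u * (y - x) + x - x) + x = _
    ring
  | pred k ih =>
    rw [zpow_sub_one, Equiv.Perm.mul_apply, ih, Rack.invAct_apply, zpow_sub_one, Units.val_mul]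
    change _ * (↑u⁻¹ * (y - x) + x - x) + x = _
    ring

theorem alexanderQuandle_act'_eq_self_iff [NoZeroDivisors R] {u : Rˣ} (hu : (u : R) ≠ 1)
    (x y : R) :
    letI := alexanderQuandle u
    Rack.act' x y = y ↔ y = x := by
  change u * (y - x) + x = y ↔ y = x
  constructor
  · intro h
    have h0 : ((u : R) - 1) * (y - x) = 0 := by linear_combination h
    simpa [sub_eq_zero, hu] using h0
  · rintro rfl
    simp

end Alexander

theorem isCyclicType_alexanderQuandle {F : Type*} [Field F] {u : Fˣ}
    (hgen : ∀ v : Fˣ, v ∈ Subgroup.zpowers u) (hu : (u : F) ≠ 1) :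
    @IsCyclicType F (alexanderQuandle u) := by
  let := alexanderQuandle u
  intro x
  have hfix := alexanderQuandle_act'_eq_self_iff hu x
  refine ⟨⟨x + 1, fun h => by simpa using (hfix (x + 1)).1 h, fun y hy => ?_⟩, hfix⟩
  have hyx : y - x ≠ 0 := sub_ne_zero.2 fun h => hy ((hfix y).2 h)
  obtain ⟨k, hk⟩ := Subgroup.mem_zpowers_iff.1 (hgen (Units.mk0 (y - x) hyx))
  refine ⟨k, ?_⟩
  rw [alexanderQuandle_act'_zpow, hk, Units.val_mk0]
  ring

theorem stmt12_general (p m : ℕ) (hp : p.Prime) (h3 : 3 ≤ p ^ m) :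
    ∃ (X : Type) (_ : Fintype X) (_ : Quandle X),
      Fintype.card X = p ^ m ∧ IsCyclicType X := by
  have := Fact.mk hp
  let F := GaloisField p m
  have hm : m ≠ 0 := by
    rintro rfl
    simp at h3
  have hcard : Nat.card F = p ^ m := GaloisField.card p m hm
  have : Nontrivial Fˣ := by
    rw [← Finite.one_lt_card_iff_nontrivial, Nat.card_units, hcard]
    omega
  obtain ⟨u, hgen⟩ := IsCyclic.exists_generator (α := Fˣ)
  have hu : (u : F) ≠ 1 := by
    rintro hu
    obtain ⟨v, hv⟩ := exists_ne (1 : Fˣ)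
    have := hgen v
    rw [Units.val_eq_one.1 hu, Subgroup.zpowers_one_eq_bot, Subgroup.mem_bot] at this
    exact hv this
  let := Fintype.ofFinite F
  exact ⟨F, inferInstance, alexanderQuandle u, Nat.card_eq_fintype_card (α := F) ▸ hcard,
    isCyclicType_alexanderQuandle hgen hu⟩

theorem stmt12 (p m : ℕ) (hp : p.Prime) (hm : 1 ≤ m) (h3 : 3 ≤ p ^ m) :
    ∃ (X : Type) (_ : Fintype X) (_ : Quandle X),
      Fintype.card X = p ^ m ∧ IsCyclicType X :=
  stmt12_general p m hp h3
end

section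
/- In the group PSL(d, q) with d ≥ 2 acting on the projective space P(V) of a d-dimensional vector space V over 𝔽_q, the stabilizer of a projective point [v] has trivial center. -/
/-- The map induced on projective space by an element of `SL(d, K)`. -/
noncomputable def pmap {K : Type*} [Field K] {d : ℕ}
    (A : Matrix.SpecialLinearGroup (Fin d) K) :
    Projectivization K (Fin d → K) → Projectivization K (Fin d → K) :=
  Projectivization.map
    ((Matrix.SpecialLinearGroup.toLin' A : (Fin d → K) ≃ₗ[K] (Fin d → K)) :
      (Fin d → K) →ₗ[K] (Fin d → K))
    (Matrix.SpecialLinearGroup.toLin' A).injective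

/-!
Let `g ∈ SL(V)` fix `[v]` and commute on `ℙ(V)` with every element of the stabiliser of `[v]`.
For such an `h`, the commutator of `g` and `h` acts trivially on `ℙ(V)`, so it is a scalar, and it
fixes `v`; hence `g` and `h` commute in `SL(V)`. It then suffices to show that every vector is an
eigenvector of `g`.

If `dim V ≥ 3`, every `u` is killed, together with `v`, by some nonzero form `f`; the transvection
`x ↦ x + f x • u` fixes `v`, and commuting with it forces `g u ∈ K u`.
If `dim V = 2`, pick `a ≠ a⁻¹` (possible once `|K| ≥ 4`) and `w` independent of `v`: the element
`diag(a, a⁻¹)` in the basis `(v, w)` fixes `[v]`, and since its eigenvalues are distinct,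
commuting with it forces `g w ∈ K w`.
-/

open scoped LinearAlgebra.Projectivization
open Module Projectivization Matrix

section

variable {K V : Type*} [Field K] [AddCommGroup V] [Module K V]

theorem exists_ne_inv_of_four_le_card [Fintype K] (h : 4 ≤ Fintype.card K) :
    ∃ a : K, a ≠ a⁻¹ := by
  classical
  have hcard : ({0, 1, -1} : Finset K).card < (Finset.univ : Finset K).card :=
    Finset.card_le_three.trans_lt (by rwa [Finset.card_univ])
  obtain ⟨a, -, ha⟩ := Finset.exists_mem_notMem_of_card_lt_card hcard
  simp only [Finset.mem_insert, Finset.mem_singleton, not_or] at ha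
  refine ⟨a, fun h => ?_⟩
  have : a * a = 1 := by rw [← mul_inv_cancel₀ ha.1, ← h]
  rcases mul_self_eq_one_iff.1 this with h1 | h1
  exacts [ha.2.1 h1, ha.2.2 h1]

theorem exists_apply_basis_eq_smul_of_commute_diagonal {ι : Type*} [Fintype ι] [DecidableEq ι]
    (b : Basis ι K V) {s : ι → K} {j : ι} (hs : ∀ i ≠ j, s i ≠ s j) {g : V →ₗ[K] V}
    (hcomm : Commute g (toLin b b (diagonal s))) : ∃ c : K, g (b j) = c • b j := by
  have hdiag (x : V) (i : ι) : b.repr (toLin b b (diagonal s) x) i = s i * b.repr x i := by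
    rw [← LinearMap.toMatrix_mulVec_repr b b, LinearMap.toMatrix_toLin, mulVec_diagonal]
  have hgj : toLin b b (diagonal s) (g (b j)) = s j • g (b j) := by
    rw [← Module.End.mul_apply, ← hcomm.eq, Module.End.mul_apply, toLin_self]
    simp [diagonal_apply, ite_smul, Finset.sum_ite_eq']
  refine ⟨b.repr (g (b j)) j, b.ext_elem fun i => ?_⟩
  rcases eq_or_ne i j with rfl | hij
  · simp
  · have := hdiag (g (b j)) i
    rw [hgj, map_smul, Finsupp.smul_apply, smul_eq_mul] at this
    rw [map_smul, Basis.repr_self, Finsupp.smul_single, Finsupp.single_eq_of_ne' hij.symm]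
    by_contra hr
    exact hs i hij (mul_right_cancel₀ hr this).symm

theorem exists_dual_ne_zero_apply_eq_zero (h : 3 ≤ finrank K V) (u v : V) :
    ∃ f : Dual K V, f ≠ 0 ∧ f u = 0 ∧ f v = 0 := by
  have hp : Submodule.span K (Set.range ![u, v]) < ⊤ := by
    apply Submodule.lt_top_of_finrank_lt_finrank
    have : Set.finrank K (Set.range ![u, v]) ≤ 2 := finrank_range_le_card ![u, v]
    exact this.trans_lt (by omega)
  obtain ⟨f, hf, hfp⟩ := Submodule.exists_dual_map_eq_bot_of_lt_top hp inferInstance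
  have hzero (x : V) (hx : x ∈ Submodule.span K (Set.range ![u, v])) : f x = 0 := by
    simpa only [hfp, Submodule.mem_bot] using Submodule.mem_map_of_mem (f := f) hx
  exact ⟨f, hf, hzero u (Submodule.subset_span ⟨0, rfl⟩), hzero v (Submodule.subset_span ⟨1, rfl⟩)⟩

namespace SpecialLinearGroup

theorem smul_mk_eq_mk_iff {g : SpecialLinearGroup K V} {v : V} (hv : v ≠ 0) :
    g • mk K v hv = mk K v hv ↔ ∃ c : K, g • v = c • v := by
  rw [smul_mk, mk_eq_mk_iff']
  exact exists_congr fun c => eq_comm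

theorem exists_smul_eq_smul_of_forall_smul_eq {g : SpecialLinearGroup K V}
    (hg : ∀ y : ℙ K V, g • y = y) : ∃ c : K, ∀ v : V, g • v = c • v := by
  obtain ⟨c, hc⟩ := (g : V →ₗ[K] V).exists_eq_smul_id_of_forall_notLinearIndependent fun v => by
    by_cases hv : v = 0
    · simp [hv, linearIndependent_fin2]
    · obtain ⟨c, hc⟩ := (smul_mk_eq_mk_iff hv).1 (hg (mk K v hv))
      simp only [LinearIndependent.pair_iff' hv, not_forall, not_not]
      exact ⟨c, hc.symm⟩
  exact ⟨c, fun v => congrArg (· v) hc⟩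

theorem commute_of_smul_comm {g h : SpecialLinearGroup K V} {v : V} (hv : v ≠ 0) {a b : K}
    (hg : g • v = a • v) (hh : h • v = b • v) (hgh : ∀ y : ℙ K V, g • h • y = h • g • y) :
    Commute g h := by
  obtain ⟨r, hr⟩ := exists_smul_eq_smul_of_forall_smul_eq (g := (h * g)⁻¹ * (g * h))
    fun y => by rw [mul_smul, mul_smul, hgh, ← mul_smul h g, inv_smul_smul]
  have hr1 : r = 1 := by
    have hgh_v : (g * h) • v = (h * g) • v := by
      rw [mul_smul, mul_smul, hg, hh, smul_comm g b, smul_comm h a, hg, hh, smul_comm]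
    have := hr v
    rw [mul_smul, hgh_v, inv_smul_smul, eq_comm] at this
    exact (smul_left_injective K hv).eq_iff.1 (this.trans (one_smul K v).symm)
  refine (inv_mul_eq_one.1 (SpecialLinearGroup.ext _ _ fun x => ?_)).symm
  simpa [hr1, SpecialLinearGroup.smul_def] using hr x

theorem exists_smul_eq_smul_of_commute_stabilizer_of_finrank_eq_two (h2 : finrank K V = 2)
    {a : K} (ha : a ≠ a⁻¹) {v : V} (hv : v ≠ 0) {g : SpecialLinearGroup K V}
    (hg : ∃ l : K, g • v = l • v)
    (hcomm : ∀ h : SpecialLinearGroup K V, (∃ c : K, h • v = c • v) → Commute g h) (w : V) :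
    ∃ c : K, g • w = c • w := by
  by_cases hvw : LinearIndependent K ![v, w]
  · have ha0 : a ≠ 0 := by rintro rfl; simp at ha
    let b := basisOfLinearIndependentOfCardEqFinrank hvw (by simp [h2])
    have hb : ⇑b = ![v, w] := coe_basisOfLinearIndependentOfCardEqFinrank hvw _
    let D := Matrix.SpecialLinearGroup.toLin_equiv b (Matrix.SpecialLinearGroup.diag2 a ha0)
    have hD : (D : V →ₗ[K] V) =
        toLin b b (diagonal fun i => if i = 0 then a else if i = 1 then a⁻¹ else 1) :=
      rfl
    have hDv : D • v = a • v := by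
      rw [show v = b 0 by simp [hb], SpecialLinearGroup.smul_def]
      change (D : V →ₗ[K] V) (b 0) = _
      simp [hD, toLin_self, diagonal_apply]
    have hcommD : Commute (g : V →ₗ[K] V) (D : V →ₗ[K] V) :=
      (hcomm D ⟨a, hDv⟩).map
        (LinearEquiv.automorphismGroup.toLinearMapMonoidHom.comp SpecialLinearGroup.toLinearEquiv)
    rw [hD] at hcommD
    obtain ⟨c, hc⟩ := exists_apply_basis_eq_smul_of_commute_diagonal b (j := 1)
      (by simp [Fin.forall_fin_two, ha]) hcommD
    exact ⟨c, by simpa [hb, SpecialLinearGroup.smul_def] using hc⟩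
  · obtain ⟨c, rfl⟩ : ∃ c : K, c • v = w := by
      simpa [LinearIndependent.pair_iff' hv] using hvw
    obtain ⟨l, hl⟩ := hg
    exact ⟨l, by rw [smul_comm, hl, smul_comm]⟩

section FiniteDimensional

variable [FiniteDimensional K V]

def transvection {f : Dual K V} {v : V} (hfv : f v = 0) : SpecialLinearGroup K V :=
  ⟨LinearEquiv.transvection hfv, by
    ext
    rw [LinearEquiv.coe_det, LinearEquiv.transvection.coe_toLinearMap,
      LinearMap.transvection.det, hfv, add_zero, Units.val_one]⟩

theorem transvection_smul {f : Dual K V} {v : V} (hfv : f v = 0) (x : V) :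
    transvection hfv • x = x + f x • v :=
  LinearEquiv.transvection.apply hfv x

theorem exists_smul_eq_smul_of_commute_transvection {g : SpecialLinearGroup K V}
    {f : Dual K V} {u : V} (hfu : f u = 0) (hf : f ≠ 0) (hcomm : Commute g (transvection hfu)) :
    ∃ c : K, g • u = c • u := by
  obtain ⟨x, hx⟩ : ∃ x, f x ≠ 0 := by simpa [DFunLike.ne_iff] using hf
  have key := congrArg (· • x) hcomm.eq
  simp only [mul_smul, transvection_smul, smul_add, smul_comm g (f x), add_right_inj] at key
  exact ⟨(f x)⁻¹ * f (g • x), by rw [mul_smul, ← key, inv_smul_smul₀ hx]⟩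

end FiniteDimensional

theorem exists_smul_eq_smul_of_commute_stabilizer_of_three_le_finrank (h3 : 3 ≤ finrank K V)
    {v : V} {g : SpecialLinearGroup K V}
    (hcomm : ∀ h : SpecialLinearGroup K V, h • v = v → Commute g h) (u : V) :
    ∃ c : K, g • u = c • u := by
  have : FiniteDimensional K V := Module.finite_of_finrank_pos (by omega)
  obtain ⟨f, hf, hfu, hfv⟩ := exists_dual_ne_zero_apply_eq_zero h3 u v
  exact exists_smul_eq_smul_of_commute_transvection hfu hf
    (hcomm _ (by rw [transvection_smul, hfv, zero_smul, add_zero]))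

theorem smul_eq_self_of_commute_stabilizer
    (hV : 3 ≤ finrank K V ∨ finrank K V = 2 ∧ ∃ a : K, a ≠ a⁻¹) {x : ℙ K V}
    {g : SpecialLinearGroup K V} (hg : g • x = x)
    (hcomm : ∀ h : SpecialLinearGroup K V, h • x = x → ∀ y : ℙ K V, g • h • y = h • g • y)
    (y : ℙ K V) : g • y = y := by
  induction x using Projectivization.ind with | h v hv =>
  induction y using Projectivization.ind with | h w _ =>
  rw [smul_mk_eq_mk_iff] at hg ⊢
  have hcomm' (h : SpecialLinearGroup K V) (hh : ∃ c : K, h • v = c • v) : Commute g h := by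
    obtain ⟨a, ha⟩ := hg
    obtain ⟨b, hb⟩ := hh
    exact commute_of_smul_comm hv ha hb (hcomm h ((smul_mk_eq_mk_iff hv).2 ⟨b, hb⟩))
  rcases hV with h3 | ⟨h2, a, ha⟩
  · exact exists_smul_eq_smul_of_commute_stabilizer_of_three_le_finrank h3
      (fun h hh => hcomm' h ⟨1, by rw [hh, one_smul]⟩) w
  · exact exists_smul_eq_smul_of_commute_stabilizer_of_finrank_eq_two h2 ha hv hg hcomm' w

end SpecialLinearGroup

open Matrix.SpecialLinearGroup in
theorem pmap_apply {d : ℕ} (A : Matrix.SpecialLinearGroup (Fin d) K) (x : ℙ K (Fin d → K)) :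
    pmap A x = toLin'_equiv A • x :=
  rfl

end

theorem stmt17 {K : Type*} [Field K] [Fintype K] {d : ℕ} (hd : 2 ≤ d)
    (hdq : d = 2 → 4 ≤ Fintype.card K) (v : Fin d → K) (hv : v ≠ 0) :
    ∀ A : Matrix.SpecialLinearGroup (Fin d) K,
      pmap A (Projectivization.mk K v hv) = Projectivization.mk K v hv →
      (∀ B : Matrix.SpecialLinearGroup (Fin d) K,
        pmap B (Projectivization.mk K v hv) = Projectivization.mk K v hv →
        pmap A ∘ pmap B = pmap B ∘ pmap A) →
      pmap A = id := by
  intro A hA hC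
  have hV : 3 ≤ finrank K (Fin d → K) ∨ finrank K (Fin d → K) = 2 ∧ ∃ a : K, a ≠ a⁻¹ := by
    rw [finrank_fin_fun]
    rcases (by omega : 3 ≤ d ∨ d = 2) with h3 | h2
    · exact .inl h3
    · exact .inr ⟨h2, exists_ne_inv_of_four_le_card (hdq h2)⟩
  funext y
  refine SpecialLinearGroup.smul_eq_self_of_commute_stabilizer hV
    (g := Matrix.SpecialLinearGroup.toLin'_equiv A) hA (fun h hh y => ?_) y
  have hB := hC (Matrix.SpecialLinearGroup.toLin'_equiv.symm h)
    (by rwa [pmap_apply, MulEquiv.apply_symm_apply])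
  simpa only [Function.comp_apply, pmap_apply, MulEquiv.apply_symm_apply] using congrFun hB y
end
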